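/- Redundant information is non-negative and bounded by each single-source mutual information: 0 ≤ I_red(Z;X,Y) ≤ min{I(Z;X), I(Z;Y)}; in particular the unique-information terms I(Z;X) − I_red(Z;X,Y) and I(Z;Y) − I_red(Z;X,Y) are non-negative. -/
import Mathlib


open scoped BigOperators
set_option linter.unusedSectionVars false

/-- `p` is a probability mass function on a finite type. -/
def IsPMF {α : Type*} [Fintype α] (p : α → ℝ) : Prop :=
  (∀ a, 0 ≤ p a) ∧ ∑ a, p a = 1

/-- Kullback–Leibler divergence `D(u‖v) = Σ u log (u/v)` (with the convention `0 log 0 = 0`),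
`⊤` if absolute continuity fails, i.e. if `u a > 0 = v a` for some `a`. -/
noncomputable def klDiv {α : Type*} [Fintype α] (u v : α → ℝ) : EReal :=
  if ∀ a, 0 < u a → 0 < v a then ((∑ a, u a * Real.log (u a / v a) : ℝ) : EReal) else ⊤

variable {𝓧 𝓨 𝓩 : Type*} [Fintype 𝓧] [Fintype 𝓨] [Fintype 𝓩]

/-- Marginal distribution of the first variable `X`. -/
noncomputable def margX (p : 𝓧 × 𝓨 × 𝓩 → ℝ) (x : 𝓧) : ℝ := ∑ y, ∑ z, p (x, y, z)

/-- Marginal distribution of the second variable `Y`. -/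
noncomputable def margY (p : 𝓧 × 𝓨 × 𝓩 → ℝ) (y : 𝓨) : ℝ := ∑ x, ∑ z, p (x, y, z)

/-- Marginal distribution of the third variable `Z`. -/
noncomputable def margZ (p : 𝓧 × 𝓨 × 𝓩 → ℝ) (z : 𝓩) : ℝ := ∑ x, ∑ y, p (x, y, z)

/-- Joint marginal `p(x,z)`. -/
noncomputable def margXZ (p : 𝓧 × 𝓨 × 𝓩 → ℝ) (x : 𝓧) (z : 𝓩) : ℝ := ∑ y, p (x, y, z)

/-- Joint marginal `p(y,z)`. -/
noncomputable def margYZ (p : 𝓧 × 𝓨 × 𝓩 → ℝ) (y : 𝓨) (z : 𝓩) : ℝ := ∑ x, p (x, y, z)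

/-- Joint marginal `p(x,y)`. -/
noncomputable def margXY (p : 𝓧 × 𝓨 × 𝓩 → ℝ) (x : 𝓧) (y : 𝓨) : ℝ := ∑ z, p (x, y, z)

/-- Conditional distribution `p(·|x)` of `Z` given `X = x`. -/
noncomputable def condX (p : 𝓧 × 𝓨 × 𝓩 → ℝ) (x : 𝓧) : 𝓩 → ℝ :=
  fun z => margXZ p x z / margX p x

/-- Conditional distribution `p(·|y)` of `Z` given `Y = y`. -/
noncomputable def condY (p : 𝓧 × 𝓨 × 𝓩 → ℝ) (y : 𝓨) : 𝓩 → ℝ :=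
  fun z => margYZ p y z / margY p y

/-- Conditional distribution `p(·|x,y)` of `Z` given `(X,Y) = (x,y)`. -/
noncomputable def condXY (p : 𝓧 × 𝓨 × 𝓩 → ℝ) (x : 𝓧) (y : 𝓨) : 𝓩 → ℝ :=
  fun z => p (x, y, z) / margXY p x y

/-- `C_X`: the convex hull of the conditionals `{p(·|x) : p(x) > 0}`. -/
noncomputable def CXhull (p : 𝓧 × 𝓨 × 𝓩 → ℝ) : Set (𝓩 → ℝ) :=
  convexHull ℝ {q | ∃ x, 0 < margX p x ∧ q = condX p x}

/-- `C_Y`: the convex hull of the conditionals `{p(·|y) : p(y) > 0}`. -/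
noncomputable def CYhull (p : 𝓧 × 𝓨 × 𝓩 → ℝ) : Set (𝓩 → ℝ) :=
  convexHull ℝ {q | ∃ y, 0 < margY p y ∧ q = condY p y}

/-- Mutual information `I(Z;X)` (terms with `p(x,z) = 0` vanish). -/
noncomputable def miZX (p : 𝓧 × 𝓨 × 𝓩 → ℝ) : ℝ :=
  ∑ x, ∑ z, margXZ p x z * Real.log (margXZ p x z / (margX p x * margZ p z))

/-- Mutual information `I(Z;Y)`. -/
noncomputable def miZY (p : 𝓧 × 𝓨 × 𝓩 → ℝ) : ℝ :=
  ∑ y, ∑ z, margYZ p y z * Real.log (margYZ p y z / (margY p y * margZ p z))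

/-- Mutual information `I(Z;X,Y)` between `Z` and the joint variable `(X,Y)`. -/
noncomputable def miZXY (p : 𝓧 × 𝓨 × 𝓩 → ℝ) : ℝ :=
  ∑ x, ∑ y, ∑ z, p (x, y, z) * Real.log (p (x, y, z) / (margXY p x y * margZ p z))

/-- Projected information `I_pr(X ↘ Y; Z) =
`Σ_{x : p(x)>0} p(x)·[D(p(·|x)‖p_Z) − inf_{q ∈ C_Y} D(p(·|x)‖q)]`. -/
noncomputable def IprXY (p : 𝓧 × 𝓨 × 𝓩 → ℝ) : ℝ :=
  ∑ x, if 0 < margX p x then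
      margX p x * ((klDiv (condX p x) (margZ p)).toReal -
        (⨅ q ∈ CYhull p, klDiv (condX p x) q).toReal)
    else 0

/-- Projected information `I_pr(Y ↘ X; Z)`. -/
noncomputable def IprYX (p : 𝓧 × 𝓨 × 𝓩 → ℝ) : ℝ :=
  ∑ y, if 0 < margY p y then
      margY p y * ((klDiv (condY p y) (margZ p)).toReal -
        (⨅ q ∈ CXhull p, klDiv (condY p y) q).toReal)
    else 0

/-- Redundant information `I_red(Z;X,Y) = min {I_pr(X↘Y;Z), I_pr(Y↘X;Z)}`. -/
noncomputable def Ired (p : 𝓧 × 𝓨 × 𝓩 → ℝ) : ℝ := min (IprXY p) (IprYX p)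

section Helpers

lemma klDiv_nonneg'' {α : Type*} [Fintype α] {u v : α → ℝ} (hu : IsPMF u)
    (hv0 : ∀ a, 0 ≤ v a) (hv1 : ∑ a, v a ≤ 1) : (0 : EReal) ≤ klDiv u v := by
  unfold klDiv
  split_ifs with h
  · have key : ∀ a : α, u a - v a ≤ u a * Real.log (u a / v a) := by
      intro a
      rcases eq_or_lt_of_le (hu.1 a) with h0 | h0
      · simp [← h0, hv0 a]
      · have hva := h a h0
        have hlog : Real.log (v a / u a) ≤ v a / u a - 1 :=
          Real.log_le_sub_one_of_pos (div_pos hva h0)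
        have heq : Real.log (u a / v a) = -Real.log (v a / u a) := by
          rw [← Real.log_inv, inv_div]
        have h2 : 1 - v a / u a ≤ Real.log (u a / v a) := by
          rw [heq]; linarith
        have h3 : u a * (1 - v a / u a) ≤ u a * Real.log (u a / v a) :=
          mul_le_mul_of_nonneg_left h2 h0.le
        have h4 : u a * (1 - v a / u a) = u a - v a := by
          field_simp
        linarith
    have hsum : (1 : ℝ) - ∑ a, v a ≤ ∑ a, u a * Real.log (u a / v a) := by
      have hs : ∑ a, (u a - v a) ≤ ∑ a, u a * Real.log (u a / v a) :=
        Finset.sum_le_sum fun a _ => key a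
      rw [Finset.sum_sub_distrib, hu.2] at hs
      exact hs
    have : (0 : ℝ) ≤ ∑ a, u a * Real.log (u a / v a) := by linarith
    exact_mod_cast this
  · exact le_top

lemma convex_isPMF' {α : Type*} [Fintype α] : Convex ℝ {q : α → ℝ | IsPMF q} := by
  intro q hq r hr a b ha hb hab
  constructor
  · intro z
    simp only [Pi.add_apply, Pi.smul_apply, smul_eq_mul]
    exact add_nonneg (mul_nonneg ha (hq.1 z)) (mul_nonneg hb (hr.1 z))
  · simp only [Pi.add_apply, Pi.smul_apply, smul_eq_mul]
    rw [Finset.sum_add_distrib, ← Finset.mul_sum, ← Finset.mul_sum, hq.2, hr.2]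
    simpa using hab

variable {𝓧 𝓨 𝓩 : Type*} [Fintype 𝓧] [Fintype 𝓨] [Fintype 𝓩]
variable (p : 𝓧 × 𝓨 × 𝓩 → ℝ)

lemma margXZ_nonneg (hp : IsPMF p) (x : 𝓧) (z : 𝓩) : 0 ≤ margXZ p x z :=
  Finset.sum_nonneg fun _ _ => hp.1 _

lemma margYZ_nonneg (hp : IsPMF p) (y : 𝓨) (z : 𝓩) : 0 ≤ margYZ p y z :=
  Finset.sum_nonneg fun _ _ => hp.1 _

lemma margX_nonneg (hp : IsPMF p) (x : 𝓧) : 0 ≤ margX p x :=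
  Finset.sum_nonneg fun _ _ => Finset.sum_nonneg fun _ _ => hp.1 _

lemma margY_nonneg (hp : IsPMF p) (y : 𝓨) : 0 ≤ margY p y :=
  Finset.sum_nonneg fun _ _ => Finset.sum_nonneg fun _ _ => hp.1 _

lemma sum_margXZ (x : 𝓧) : ∑ z, margXZ p x z = margX p x := by
  unfold margXZ margX; rw [Finset.sum_comm]

lemma sum_margYZ (y : 𝓨) : ∑ z, margYZ p y z = margY p y := by
  unfold margYZ margY; rw [Finset.sum_comm]

lemma margXZ_le_margZ (hp : IsPMF p) (x : 𝓧) (z : 𝓩) : margXZ p x z ≤ margZ p z := by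
  unfold margXZ margZ
  exact Finset.single_le_sum (f := fun x' => ∑ y, p (x', y, z))
    (fun _ _ => Finset.sum_nonneg fun _ _ => hp.1 _) (Finset.mem_univ x)

lemma margYZ_le_margZ (hp : IsPMF p) (y : 𝓨) (z : 𝓩) : margYZ p y z ≤ margZ p z := by
  unfold margYZ margZ
  rw [Finset.sum_comm]
  exact Finset.single_le_sum (f := fun y' => ∑ x, p (x, y', z))
    (fun _ _ => Finset.sum_nonneg fun _ _ => hp.1 _) (Finset.mem_univ y)

lemma sum_margX (hp : IsPMF p) : ∑ x, margX p x = 1 := by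
  have := hp.2
  rw [Fintype.sum_prod_type] at this
  simp only [Fintype.sum_prod_type] at this
  exact this

lemma sum_margY (hp : IsPMF p) : ∑ y, margY p y = 1 := by
  rw [← sum_margX p hp]
  unfold margY margX
  rw [Finset.sum_comm]

lemma condX_pmf (hp : IsPMF p) {x : 𝓧} (hx : 0 < margX p x) : IsPMF (condX p x) := by
  constructor
  · intro z; exact div_nonneg (margXZ_nonneg p hp x z) hx.le
  · unfold condX
    rw [← Finset.sum_div, sum_margXZ, div_self hx.ne']

lemma condY_pmf (hp : IsPMF p) {y : 𝓨} (hy : 0 < margY p y) : IsPMF (condY p y) := by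
  constructor
  · intro z; exact div_nonneg (margYZ_nonneg p hp y z) hy.le
  · unfold condY
    rw [← Finset.sum_div, sum_margYZ, div_self hy.ne']

lemma CYhull_pmf (hp : IsPMF p) {q : 𝓩 → ℝ} (hq : q ∈ CYhull p) : IsPMF q := by
  refine convexHull_min ?_ convex_isPMF' hq
  rintro q' ⟨y, hy, rfl⟩
  exact condY_pmf p hp hy

lemma CXhull_pmf (hp : IsPMF p) {q : 𝓩 → ℝ} (hq : q ∈ CXhull p) : IsPMF q := by
  refine convexHull_min ?_ convex_isPMF' hq
  rintro q' ⟨x, hx, rfl⟩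
  exact condX_pmf p hp hx

lemma margZ_mem_CYhull (hp : IsPMF p) : margZ p ∈ CYhull p := by
  classical
  set t : Finset 𝓨 := Finset.univ.filter (fun y => 0 < margY p y) with ht
  have hw0 : ∀ y ∈ t, (0:ℝ) ≤ margY p y := fun y _ => margY_nonneg p hp y
  have hsum : ∑ y ∈ t, margY p y = 1 := by
    rw [ht, Finset.sum_filter]
    rw [← sum_margY p hp]
    refine Finset.sum_congr rfl fun y _ => ?_
    split_ifs with h
    · rfl
    · have := margY_nonneg p hp y
      have : margY p y = 0 := le_antisymm (not_lt.mp h) this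
      simp [this]
  have hmem : ∀ y ∈ t, condY p y ∈ {q : 𝓩 → ℝ | ∃ y', 0 < margY p y' ∧ q = condY p y'} := by
    intro y hy
    exact ⟨y, (Finset.mem_filter.mp hy).2, rfl⟩
  have hcm := Finset.centerMass_mem_convexHull t hw0 (by rw [hsum]; norm_num) hmem
  rw [Finset.centerMass_eq_of_sum_1 _ _ hsum] at hcm
  have heq : (∑ y ∈ t, margY p y • condY p y) = margZ p := by
    funext z
    rw [Finset.sum_apply]
    have hterm : ∀ y ∈ t, (margY p y • condY p y) z = margYZ p y z := by
      intro y hy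
      have hy' := (Finset.mem_filter.mp hy).2
      simp only [Pi.smul_apply, smul_eq_mul, condY]
      field_simp
    rw [Finset.sum_congr rfl hterm, ht, Finset.sum_filter]
    have : ∀ y : 𝓨, (if 0 < margY p y then margYZ p y z else 0) = margYZ p y z := by
      intro y
      split_ifs with h
      · rfl
      · have hy0 : margY p y = 0 := le_antisymm (not_lt.mp h) (margY_nonneg p hp y)
        have h1 : margYZ p y z ≤ 0 := by
          rw [← hy0, ← sum_margYZ]
          exact Finset.single_le_sum (fun z' _ => margYZ_nonneg p hp y z') (Finset.mem_univ z)
        exact (le_antisymm h1 (margYZ_nonneg p hp y z)).symm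
    rw [Finset.sum_congr rfl fun y _ => this y]
    unfold margYZ margZ
    rw [Finset.sum_comm]
  rwa [heq] at hcm

lemma margZ_mem_CXhull (hp : IsPMF p) : margZ p ∈ CXhull p := by
  classical
  set t : Finset 𝓧 := Finset.univ.filter (fun x => 0 < margX p x) with ht
  have hw0 : ∀ x ∈ t, (0:ℝ) ≤ margX p x := fun x _ => margX_nonneg p hp x
  have hsum : ∑ x ∈ t, margX p x = 1 := by
    rw [ht, Finset.sum_filter]
    rw [← sum_margX p hp]
    refine Finset.sum_congr rfl fun x _ => ?_
    split_ifs with h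
    · rfl
    · have : margX p x = 0 := le_antisymm (not_lt.mp h) (margX_nonneg p hp x)
      simp [this]
  have hmem : ∀ x ∈ t, condX p x ∈ {q : 𝓩 → ℝ | ∃ x', 0 < margX p x' ∧ q = condX p x'} := by
    intro x hx
    exact ⟨x, (Finset.mem_filter.mp hx).2, rfl⟩
  have hcm := Finset.centerMass_mem_convexHull t hw0 (by rw [hsum]; norm_num) hmem
  rw [Finset.centerMass_eq_of_sum_1 _ _ hsum] at hcm
  have heq : (∑ x ∈ t, margX p x • condX p x) = margZ p := by
    funext z
    rw [Finset.sum_apply]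
    have hterm : ∀ x ∈ t, (margX p x • condX p x) z = margXZ p x z := by
      intro x hx
      have hx' := (Finset.mem_filter.mp hx).2
      simp only [Pi.smul_apply, smul_eq_mul, condX]
      field_simp
    rw [Finset.sum_congr rfl hterm, ht, Finset.sum_filter]
    have : ∀ x : 𝓧, (if 0 < margX p x then margXZ p x z else 0) = margXZ p x z := by
      intro x
      split_ifs with h
      · rfl
      · have hx0 : margX p x = 0 := le_antisymm (not_lt.mp h) (margX_nonneg p hp x)
        have h1 : margXZ p x z ≤ 0 := by
          rw [← hx0, ← sum_margXZ]
          exact Finset.single_le_sum (fun z' _ => margXZ_nonneg p hp x z') (Finset.mem_univ z)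
        exact (le_antisymm h1 (margXZ_nonneg p hp x z)).symm
    rw [Finset.sum_congr rfl fun x _ => this x]
    rfl
  rwa [heq] at hcm

lemma klDiv_condX_margZ (hp : IsPMF p) {x : 𝓧} (hx : 0 < margX p x) :
    klDiv (condX p x) (margZ p)
      = ((∑ z, condX p x z * Real.log (condX p x z / margZ p z) : ℝ) : EReal) := by
  unfold klDiv
  rw [if_pos]
  intro z hz
  have h1 : 0 < margXZ p x z := by
    by_contra h
    have h0 : margXZ p x z = 0 := le_antisymm (not_lt.mp h) (margXZ_nonneg p hp x z)
    rw [condX, h0, zero_div] at hz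
    exact lt_irrefl 0 hz
  exact lt_of_lt_of_le h1 (margXZ_le_margZ p hp x z)

lemma klDiv_condY_margZ (hp : IsPMF p) {y : 𝓨} (hy : 0 < margY p y) :
    klDiv (condY p y) (margZ p)
      = ((∑ z, condY p y z * Real.log (condY p y z / margZ p z) : ℝ) : EReal) := by
  unfold klDiv
  rw [if_pos]
  intro z hz
  have h1 : 0 < margYZ p y z := by
    by_contra h
    have h0 : margYZ p y z = 0 := le_antisymm (not_lt.mp h) (margYZ_nonneg p hp y z)
    rw [condY, h0, zero_div] at hz
    exact lt_irrefl 0 hz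
  exact lt_of_lt_of_le h1 (margYZ_le_margZ p hp y z)

lemma miZX_eq (hp : IsPMF p) :
    miZX p = ∑ x, if 0 < margX p x then
      margX p x * (klDiv (condX p x) (margZ p)).toReal else 0 := by
  unfold miZX
  refine Finset.sum_congr rfl fun x _ => ?_
  split_ifs with hx
  · rw [klDiv_condX_margZ p hp hx, EReal.toReal_coe, Finset.mul_sum]
    refine Finset.sum_congr rfl fun z _ => ?_
    simp only [condX]
    rw [div_div, ← mul_assoc, mul_div_cancel₀ _ hx.ne']
  · have hx0 : margX p x = 0 := le_antisymm (not_lt.mp hx) (margX_nonneg p hp x)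
    refine Finset.sum_eq_zero fun z _ => ?_
    have h1 : margXZ p x z = 0 := by
      refine le_antisymm ?_ (margXZ_nonneg p hp x z)
      rw [← hx0, ← sum_margXZ]
      exact Finset.single_le_sum (fun z' _ => margXZ_nonneg p hp x z') (Finset.mem_univ z)
    simp [h1]

lemma miZY_eq (hp : IsPMF p) :
    miZY p = ∑ y, if 0 < margY p y then
      margY p y * (klDiv (condY p y) (margZ p)).toReal else 0 := by
  unfold miZY
  refine Finset.sum_congr rfl fun y _ => ?_
  split_ifs with hy
  · rw [klDiv_condY_margZ p hp hy, EReal.toReal_coe, Finset.mul_sum]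
    refine Finset.sum_congr rfl fun z _ => ?_
    simp only [condY]
    rw [div_div, ← mul_assoc, mul_div_cancel₀ _ hy.ne']
  · have hy0 : margY p y = 0 := le_antisymm (not_lt.mp hy) (margY_nonneg p hp y)
    refine Finset.sum_eq_zero fun z _ => ?_
    have h1 : margYZ p y z = 0 := by
      refine le_antisymm ?_ (margYZ_nonneg p hp y z)
      rw [← hy0, ← sum_margYZ]
      exact Finset.single_le_sum (fun z' _ => margYZ_nonneg p hp y z') (Finset.mem_univ z)
    simp [h1]

lemma IprXY_bounds (hp : IsPMF p) : 0 ≤ IprXY p ∧ IprXY p ≤ miZX p := by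
  have key : ∀ x : 𝓧, 0 < margX p x →
      0 ≤ (⨅ q ∈ CYhull p, klDiv (condX p x) q).toReal ∧
      (⨅ q ∈ CYhull p, klDiv (condX p x) q).toReal
        ≤ (klDiv (condX p x) (margZ p)).toReal := by
    intro x hx
    set I : EReal := ⨅ q ∈ CYhull p, klDiv (condX p x) q with hI
    have hInn : (0 : EReal) ≤ I := by
      refine le_iInf₂ fun q hq => ?_
      have hqp := CYhull_pmf p hp hq
      exact klDiv_nonneg'' (condX_pmf p hp hx) hqp.1 (le_of_eq hqp.2)
    have hIle : I ≤ klDiv (condX p x) (margZ p) :=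
      iInf₂_le (margZ p) (margZ_mem_CYhull p hp)
    have hD := klDiv_condX_margZ p hp hx
    constructor
    · rcases eq_or_ne I ⊤ with h | h
      · simp [h]
      · have hb : I ≠ ⊥ := fun hb => by simp [hb] at hInn
        have := EReal.toReal_le_toReal hInn (by simp) h
        simpa using this
    · have hb : I ≠ ⊥ := fun hb => by simp [hb] at hInn
      have ht : klDiv (condX p x) (margZ p) ≠ ⊤ := by rw [hD]; exact EReal.coe_ne_top _
      exact EReal.toReal_le_toReal hIle hb ht
  unfold IprXY
  constructor
  · refine Finset.sum_nonneg fun x _ => ?_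
    split_ifs with hx
    · exact mul_nonneg (margX_nonneg p hp x) (sub_nonneg.mpr (key x hx).2)
    · exact le_refl 0
  · rw [miZX_eq p hp]
    refine Finset.sum_le_sum fun x _ => ?_
    split_ifs with hx
    · exact mul_le_mul_of_nonneg_left (sub_le_self _ (key x hx).1) (margX_nonneg p hp x)
    · exact le_refl 0

lemma IprYX_bounds (hp : IsPMF p) : 0 ≤ IprYX p ∧ IprYX p ≤ miZY p := by
  have key : ∀ y : 𝓨, 0 < margY p y →
      0 ≤ (⨅ q ∈ CXhull p, klDiv (condY p y) q).toReal ∧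
      (⨅ q ∈ CXhull p, klDiv (condY p y) q).toReal
        ≤ (klDiv (condY p y) (margZ p)).toReal := by
    intro y hy
    set I : EReal := ⨅ q ∈ CXhull p, klDiv (condY p y) q with hI
    have hInn : (0 : EReal) ≤ I := by
      refine le_iInf₂ fun q hq => ?_
      have hqp := CXhull_pmf p hp hq
      exact klDiv_nonneg'' (condY_pmf p hp hy) hqp.1 (le_of_eq hqp.2)
    have hIle : I ≤ klDiv (condY p y) (margZ p) :=
      iInf₂_le (margZ p) (margZ_mem_CXhull p hp)
    have hD := klDiv_condY_margZ p hp hy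
    constructor
    · rcases eq_or_ne I ⊤ with h | h
      · simp [h]
      · have hb : I ≠ ⊥ := fun hb => by simp [hb] at hInn
        have := EReal.toReal_le_toReal hInn (by simp) h
        simpa using this
    · have hb : I ≠ ⊥ := fun hb => by simp [hb] at hInn
      have ht : klDiv (condY p y) (margZ p) ≠ ⊤ := by rw [hD]; exact EReal.coe_ne_top _
      exact EReal.toReal_le_toReal hIle hb ht
  unfold IprYX
  constructor
  · refine Finset.sum_nonneg fun y _ => ?_
    split_ifs with hy
    · exact mul_nonneg (margY_nonneg p hp y) (sub_nonneg.mpr (key y hy).2)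
    · exact le_refl 0
  · rw [miZY_eq p hp]
    refine Finset.sum_le_sum fun y _ => ?_
    split_ifs with hy
    · exact mul_le_mul_of_nonneg_left (sub_le_self _ (key y hy).1) (margY_nonneg p hp y)
    · exact le_refl 0

end Helpers

/-- Redundant information is non-negative and bounded by each single-source mutual
information: `0 ≤ I_red(Z;X,Y) ≤ min {I(Z;X), I(Z;Y)}`; in particular the unique-information
terms `I(Z;X) − I_red(Z;X,Y)` and `I(Z;Y) − I_red(Z;X,Y)` are non-negative. -/
theorem Ired_nonneg_le_mi
    [Nonempty 𝓧] [Nonempty 𝓨] [Nonempty 𝓩]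
    (p : 𝓧 × 𝓨 × 𝓩 → ℝ) (hp : IsPMF p) :
    0 ≤ Ired p ∧ Ired p ≤ min (miZX p) (miZY p) ∧
      0 ≤ miZX p - Ired p ∧ 0 ≤ miZY p - Ired p := by
  have hX := IprXY_bounds p hp
  have hY := IprYX_bounds p hp
  have h1 : 0 ≤ Ired p := le_min hX.1 hY.1
  have h2 : Ired p ≤ miZX p := le_trans (min_le_left _ _) hX.2
  have h3 : Ired p ≤ miZY p := le_trans (min_le_right _ _) hY.2
  exact ⟨h1, le_min h2 h3, sub_nonneg.mpr h2, sub_nonneg.mpr h3⟩
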